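/- arXiv:2312.05322 — 2 statements merged into one kernel-verified Lean document; each statement's English description precedes it below -/
import Mathlib

section
/- Let M ∈ ℝ^{N×N} be symmetric positive definite, let f : ℝ^N → ℝ^N, and let I_1, …, I_m : ℝ^N → ℝ be differentiable. Suppose a : ℝ → ℝ^N is differentiable and λ : ℝ → ℝ^m is such that for every t: (i) C(a(t)) λ(t) = b(a(t)), where C_ij(a) = ⟨∇I_i(a), M⁻¹ ∇I_j(a)⟩ and b_i(a) = ⟨∇I_i(a), M⁻¹ f(a)⟩, and (ii) M ȧ(t) = f(a(t)) − Σ_{k=1}^m λ_k(t) ∇I_k(a(t)) (the Galerkin RONS equation). Then for each k = 1, …, m, the function t ↦ I_k(a(t)) is constant. -/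
/-!
Along the flow, `d/dt I_k(a) = ⟨∇I_k, ȧ⟩ = ⟨∇I_k, M⁻¹ (f − Σ_j λ_j ∇I_j)⟩ = b_k − (C λ)_k`,
which is exactly the `k`-th row of the constraint equation and hence vanishes.
-/

open Matrix

theorem dotProduct_eq_zero_of_mulVec_eq_sub_sum {n ι R : Type*} [Fintype n] [DecidableEq n]
    [Fintype ι] [CommRing R] {M : Matrix n n R} (hM : IsUnit M) {g : ι → n → R}
    {F v : n → R} {μ : ι → R} {k : ι}
    (hμ : ∑ j, (g k ⬝ᵥ (M⁻¹ *ᵥ g j)) * μ j = g k ⬝ᵥ (M⁻¹ *ᵥ F))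
    (hv : M *ᵥ v = F - ∑ j, μ j • g j) :
    g k ⬝ᵥ v = 0 := by
  have hv' : v = M⁻¹ *ᵥ (F - ∑ j, μ j • g j) := by
    rw [← hv, mulVec_mulVec, nonsing_inv_mul M ((isUnit_iff_isUnit_det M).mp hM), one_mulVec]
  rw [hv', mulVec_sub, dotProduct_sub, mulVec_sum, dotProduct_sum, ← hμ, sub_eq_zero]
  refine Finset.sum_congr rfl fun j _ => ?_
  rw [mulVec_smul, dotProduct_smul, smul_eq_mul, mul_comm]

theorem eq_of_inner_gradient_deriv_eq_zero {E : Type*} [NormedAddCommGroup E]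
    [InnerProductSpace ℝ E] [CompleteSpace E] {I : E → ℝ} (hI : Differentiable ℝ I)
    {a : ℝ → E} (ha : Differentiable ℝ a)
    (h : ∀ t, inner ℝ (gradient I (a t)) (deriv a t) = 0) (s t : ℝ) :
    I (a s) = I (a t) := by
  refine is_const_of_deriv_eq_zero (hI.comp ha) (fun u => ?_) s t
  have hchain : HasDerivAt (I ∘ a) (inner ℝ (gradient I (a u)) (deriv a u)) u :=
    (hI (a u)).hasGradientAt.hasFDerivAt.comp_hasDerivAt u (ha u).hasDerivAt
  rw [hchain.deriv, h u]

theorem stmt_8_general {N m : ℕ}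
    (M : Matrix (Fin N) (Fin N) ℝ) (hMpos : M.PosDef)
    (f : EuclideanSpace ℝ (Fin N) → EuclideanSpace ℝ (Fin N))
    (I : Fin m → EuclideanSpace ℝ (Fin N) → ℝ)
    (hI : ∀ k, Differentiable ℝ (I k))
    (gradI : Fin m → EuclideanSpace ℝ (Fin N) → EuclideanSpace ℝ (Fin N))
    (hgrad : ∀ k x, gradI k x = gradient (I k) x)
    (a : ℝ → EuclideanSpace ℝ (Fin N)) (ha : Differentiable ℝ a)
    (lam : ℝ → Fin m → ℝ)
    (hconstraint : ∀ t i,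
      ∑ j, (gradI i (a t) ⬝ᵥ (M⁻¹ *ᵥ gradI j (a t))) * lam t j
        = gradI i (a t) ⬝ᵥ (M⁻¹ *ᵥ f (a t)))
    (hode : ∀ t, M *ᵥ WithLp.ofLp (deriv a t)
        = f (a t) - ∑ k, lam t k • gradI k (a t)) :
    ∀ k, ∀ s t : ℝ, I k (a s) = I k (a t) := by
  intro k
  refine eq_of_inner_gradient_deriv_eq_zero (hI k) ha fun t => ?_
  rw [← hgrad, EuclideanSpace.inner_eq_star_dotProduct, star_trivial, dotProduct_comm]
  refine dotProduct_eq_zero_of_mulVec_eq_sub_sum (g := fun j => WithLp.ofLp (gradI j (a t)))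
    hMpos.isUnit (hconstraint t k) ?_
  simpa only [WithLp.ofLp_sub, WithLp.ofLp_sum, WithLp.ofLp_smul] using hode t

/-- Galerkin RONS conserves the enforced first integrals: if `a(t)` solves
`M ȧ = f(a) − Σ_k λ_k ∇I_k(a)` where the Lagrange multipliers solve the
constraint equation `C(a) λ = b(a)` with `C_ij = ⟨∇I_i, M⁻¹ ∇I_j⟩` and
`b_i = ⟨∇I_i, M⁻¹ f⟩`, then each `t ↦ I_k(a(t))` is constant. -/
theorem stmt_8 {N m : ℕ}
    (M : Matrix (Fin N) (Fin N) ℝ) (hMsymm : M.IsSymm) (hMpos : M.PosDef)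
    (f : EuclideanSpace ℝ (Fin N) → EuclideanSpace ℝ (Fin N))
    (I : Fin m → EuclideanSpace ℝ (Fin N) → ℝ)
    (hI : ∀ k, Differentiable ℝ (I k))
    (gradI : Fin m → EuclideanSpace ℝ (Fin N) → EuclideanSpace ℝ (Fin N))
    (hgrad : ∀ k x, gradI k x = gradient (I k) x)
    (a : ℝ → EuclideanSpace ℝ (Fin N)) (ha : Differentiable ℝ a)
    (lam : ℝ → Fin m → ℝ)
    (hconstraint : ∀ t i,
      ∑ j, (gradI i (a t) ⬝ᵥ (M⁻¹ *ᵥ gradI j (a t))) * lam t j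
        = gradI i (a t) ⬝ᵥ (M⁻¹ *ᵥ f (a t)))
    (hode : ∀ t, M *ᵥ WithLp.ofLp (deriv a t)
        = f (a t) - ∑ k, lam t k • gradI k (a t)) :
    ∀ k, ∀ s t : ℝ, I k (a s) = I k (a t) :=
  stmt_8_general M hMpos f I hI gradI hgrad a ha lam hconstraint hode
end

section
/- Let M ∈ ℝ^{N×N} be the diagonal matrix with positive diagonal entries M_ii = |Ω_i| (the cell volumes), let 𝓕 : ℝ^N → ℝ^N be the finite volume flux map, and let I_1, …, I_m : ℝ^N → ℝ be differentiable. Suppose U : ℝ → ℝ^N is differentiable and λ : ℝ → ℝ^m is such that for every t: (i) C(U(t)) λ(t) = b(U(t)), where C_ij(U) = ⟨∇I_i(U), M⁻¹ ∇I_j(U)⟩ and b_i(U) = ⟨∇I_i(U), 𝓕(U)⟩, and (ii) U̇(t) = 𝓕(U(t)) − Σ_{k=1}^m λ_k(t) M⁻¹ ∇I_k(U(t)) (the finite volume RONS equation). Then for each k = 1, …, m, the function t ↦ I_k(U(t)) is constant; in particular, if I_1(U) = Σ_{i=1}^N |Ω_i| U_i is among the enforced invariants, the total state variable is conserved. -/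
open Matrix

/-! By the chain rule, `d/dt I_k(U) = ⟨∇I_k, U̇⟩ = ⟨∇I_k, 𝓕⟩ − Σ_j λ_j ⟨∇I_k, M⁻¹ ∇I_j⟩ = b_k − (C λ)_k`,
which vanishes because the multipliers solve `C λ = b`. -/

theorem dotProduct_sub_sum_smul_eq_zero {R n ι : Type*} [CommRing R] [Fintype n] [Fintype ι]
    {g F : n → R} {w : ι → n → R} {c : ι → R} (h : ∑ j, (g ⬝ᵥ w j) * c j = g ⬝ᵥ F) :
    g ⬝ᵥ (F - ∑ j, c j • w j) = 0 := by
  simp only [dotProduct_sub, dotProduct_sum, dotProduct_smul, smul_eq_mul, mul_comm (c _), h,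
    sub_self]

theorem apply_eq_of_inner_gradient_deriv_eq_zero {E : Type*} [NormedAddCommGroup E]
    [InnerProductSpace ℝ E] [CompleteSpace E] {f : E → ℝ} {U : ℝ → E} (hf : Differentiable ℝ f)
    (hU : Differentiable ℝ U) (h : ∀ t, inner ℝ (gradient f (U t)) (deriv U t) = 0) (s t : ℝ) :
    f (U s) = f (U t) := by
  refine is_const_of_deriv_eq_zero (hf.comp hU) (fun t => ?_) s t
  rw [fderiv_comp_deriv t (hf (U t)) (hU t), ← inner_gradient_left, h]

theorem stmt_9_general {N m : ℕ}
    (vol : Fin N → ℝ)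
    (M : Matrix (Fin N) (Fin N) ℝ)
    (F : EuclideanSpace ℝ (Fin N) → EuclideanSpace ℝ (Fin N))
    (I : Fin m → EuclideanSpace ℝ (Fin N) → ℝ)
    (hI : ∀ k, Differentiable ℝ (I k))
    (gradI : Fin m → EuclideanSpace ℝ (Fin N) → EuclideanSpace ℝ (Fin N))
    (hgrad : ∀ k x, gradI k x = gradient (I k) x)
    (U : ℝ → EuclideanSpace ℝ (Fin N)) (hU : Differentiable ℝ U)
    (lam : ℝ → Fin m → ℝ)
    (hconstraint : ∀ t i,
      ∑ j, (gradI i (U t) ⬝ᵥ (M⁻¹ *ᵥ gradI j (U t))) * lam t j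
        = gradI i (U t) ⬝ᵥ F (U t))
    (hode : ∀ t i, deriv U t i
        = F (U t) i - ∑ k, lam t k * (M⁻¹ *ᵥ gradI k (U t)) i) :
    (∀ k, ∀ s t : ℝ, I k (U s) = I k (U t)) ∧
    (∀ k, (∀ V, I k V = ∑ i, vol i * V i) →
      ∀ s t : ℝ, ∑ i, vol i * U s i = ∑ i, vol i * U t i) := by
  have conserved : ∀ k s t, I k (U s) = I k (U t) := by
    intro k
    refine apply_eq_of_inner_gradient_deriv_eq_zero (hI k) hU fun t => ?_
    have hU' : ⇑(deriv U t) = F (U t) - ∑ j, lam t j • (M⁻¹ *ᵥ gradI j (U t)) := by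
      funext i
      simp [hode]
    rw [EuclideanSpace.inner_eq_star_dotProduct, ← hgrad, star_trivial, dotProduct_comm,
      hU']
    exact dotProduct_sub_sum_smul_eq_zero (hconstraint t k)
  refine ⟨conserved, fun k hk s t => ?_⟩
  simpa only [hk] using conserved k s t

/-- Finite volume RONS conserves all enforced first integrals: if the cell
averages `U(t)` solve `U̇ = 𝓕(U) − Σ_k λ_k M⁻¹ ∇I_k(U)` with the diagonal
metric tensor `M = diag(|Ω_1|, …, |Ω_N|)` and Lagrange multipliers solving
`C(U) λ = b(U)` where `C_ij = ⟨∇I_i, M⁻¹ ∇I_j⟩` and `b_i = ⟨∇I_i, 𝓕(U)⟩`,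
then each `t ↦ I_k(U(t))` is constant; in particular, if the total state
`Σ_i |Ω_i| U_i` is among the enforced invariants, it is conserved. -/
theorem stmt_9 {N m : ℕ}
    (vol : Fin N → ℝ) (hvol : ∀ i, 0 < vol i)
    (M : Matrix (Fin N) (Fin N) ℝ) (hMdiag : M = Matrix.diagonal vol)
    (F : EuclideanSpace ℝ (Fin N) → EuclideanSpace ℝ (Fin N))
    (I : Fin m → EuclideanSpace ℝ (Fin N) → ℝ)
    (hI : ∀ k, Differentiable ℝ (I k))
    (gradI : Fin m → EuclideanSpace ℝ (Fin N) → EuclideanSpace ℝ (Fin N))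
    (hgrad : ∀ k x, gradI k x = gradient (I k) x)
    (U : ℝ → EuclideanSpace ℝ (Fin N)) (hU : Differentiable ℝ U)
    (lam : ℝ → Fin m → ℝ)
    (hconstraint : ∀ t i,
      ∑ j, (gradI i (U t) ⬝ᵥ (M⁻¹ *ᵥ gradI j (U t))) * lam t j
        = gradI i (U t) ⬝ᵥ F (U t))
    (hode : ∀ t i, deriv U t i
        = F (U t) i - ∑ k, lam t k * (M⁻¹ *ᵥ gradI k (U t)) i) :
    (∀ k, ∀ s t : ℝ, I k (U s) = I k (U t)) ∧
    (∀ k, (∀ V, I k V = ∑ i, vol i * V i) →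
      ∀ s t : ℝ, ∑ i, vol i * U s i = ∑ i, vol i * U t i) :=
  stmt_9_general vol M F I hI gradI hgrad U hU lam hconstraint hode
end
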